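/- arXiv:1406.1236 — 12 statements merged into one kernel-verified Lean document; each statement's English description precedes it below -/
import Mathlib

section
/- Let R be a ring and e, f ∈ R with eR(1-e) ⊆ J(R) and fR(1-f) ⊆ J(R). Set g = e + f - ef. Then gR(1-g) ⊆ J(R), and for every maximal ideal P of R, g ∈ P if and only if e ∈ P and f ∈ P. -/
def IsMaxTwoSided {R : Type*} [Ring R] (P : TwoSidedIdeal R) : Prop :=
  P ≠ ⊤ ∧ ∀ Q : TwoSidedIdeal R, P < Q → Q = ⊤

def InJac {R : Type*} [Ring R] (x : R) : Prop := x ∈ Ideal.jacobson (⊥ : Ideal R)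

def IsFullElem {R : Type*} [Ring R] (u : R) : Prop := TwoSidedIdeal.span ({u} : Set R) = ⊤

def FecklyCleanElem {R : Type*} [Ring R] (a : R) : Prop :=
  ∃ e u : R, a = e + u ∧ IsFullElem u ∧ ∀ r : R, InJac (e * r * (1 - e))

def FecklyCleanRing (R : Type*) [Ring R] : Prop := ∀ a : R, FecklyCleanElem a

/-!
Since `1 - g = (1 - e)(1 - f)`, the element `g r (1 - g)` splits as
`(e r (1 - e))(1 - f) + (1 - e)(f (r (1 - e)) (1 - f))`, which lies in `J(R)`.
The Jacobson radical lies in every maximal two-sided ideal `P`, so `e(1 - e) ∈ P`;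
then `e = e g + e(1 - e)(1 - f)` recovers `e ∈ P` from `g ∈ P`, and `f = g - e + e f`.
-/

lemma inJac_iff_mem_jacobson {R : Type*} [Ring R] {x : R} :
    InJac x ↔ x ∈ TwoSidedIdeal.jacobson (⊥ : TwoSidedIdeal R) := by
  simp [InJac, TwoSidedIdeal.jacobson]

namespace TwoSidedIdeal

variable {R : Type*} [Ring R]

lemma exists_mul_one_sub_eq_one_of_mem_jacobson_bot {x : R}
    (hx : x ∈ jacobson (⊥ : TwoSidedIdeal R)) : ∃ z : R, z * (1 - x) = 1 := by
  obtain ⟨z, hz⟩ := mem_jacobson_iff.mp hx (-1)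
  refine ⟨z, ?_⟩
  rw [← sub_eq_zero, ← (mem_bot (R := R)).mp hz]
  noncomm_ring

lemma jacobson_bot_le_of_isMaxTwoSided {P : TwoSidedIdeal R} (hP : IsMaxTwoSided P) :
    jacobson (⊥ : TwoSidedIdeal R) ≤ P := by
  intro x hx
  by_contra hxP
  have hlt : P < P ⊔ jacobson ⊥ :=
    lt_of_le_of_ne le_sup_left fun h => hxP (h ▸ mem_sup_right hx)
  obtain ⟨p, hp, j, hj, hpj⟩ := mem_sup.mp (hP.2 _ hlt ▸ mem_top R : (1 : R) ∈ P ⊔ jacobson ⊥)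
  obtain ⟨z, hz⟩ := exists_mul_one_sub_eq_one_of_mem_jacobson_bot hj
  have hp_eq : p = 1 - j := eq_sub_of_add_eq hpj
  have one_mem : (1 : R) ∈ P := by
    rw [← hz, ← hp_eq]
    exact P.mul_mem_left z p hp
  exact hP.1 (P.eq_top one_mem)

lemma add_sub_mul_mul_mul_one_sub_mem (I : TwoSidedIdeal R) {e f : R}
    (he : ∀ r : R, e * r * (1 - e) ∈ I) (hf : ∀ r : R, f * r * (1 - f) ∈ I) (r : R) :
    (e + f - e * f) * r * (1 - (e + f - e * f)) ∈ I := by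
  have split : (e + f - e * f) * r * (1 - (e + f - e * f)) =
      e * r * (1 - e) * (1 - f) + (1 - e) * (f * (r * (1 - e)) * (1 - f)) := by
    noncomm_ring
  rw [split]
  exact I.add_mem (I.mul_mem_right _ _ (he r)) (I.mul_mem_left _ _ (hf _))

lemma add_sub_mul_mem_iff (P : TwoSidedIdeal R) {e : R} (he : e * (1 - e) ∈ P) (f : R) :
    e + f - e * f ∈ P ↔ e ∈ P ∧ f ∈ P := by
  constructor
  · intro hg
    have he_mem : e ∈ P := by
      have decomp : e = e * (e + f - e * f) + e * (1 - e) * (1 - f) := by noncomm_ring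
      rw [decomp]
      exact P.add_mem (P.mul_mem_left _ _ hg) (P.mul_mem_right _ _ he)
    refine ⟨he_mem, ?_⟩
    have decomp : f = (e + f - e * f) - e + e * f := by noncomm_ring
    rw [decomp]
    exact P.add_mem (P.sub_mem hg he_mem) (P.mul_mem_right _ _ he_mem)
  · rintro ⟨he_mem, hf_mem⟩
    exact P.sub_mem (P.add_mem he_mem hf_mem) (P.mul_mem_left _ _ hf_mem)

end TwoSidedIdeal

theorem stmt3 {R : Type*} [Ring R] (e f : R)
    (he : ∀ r : R, InJac (e * r * (1 - e))) (hf : ∀ r : R, InJac (f * r * (1 - f))) :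
    (∀ r : R, InJac ((e + f - e * f) * r * (1 - (e + f - e * f)))) ∧
    ∀ P : TwoSidedIdeal R, IsMaxTwoSided P → (e + f - e * f ∈ P ↔ e ∈ P ∧ f ∈ P) := by
  simp only [inJac_iff_mem_jacobson] at he hf ⊢
  refine ⟨(TwoSidedIdeal.jacobson ⊥).add_sub_mul_mul_mul_one_sub_mem he hf, fun P hP => ?_⟩
  have he_P : e * (1 - e) ∈ P := by
    simpa using TwoSidedIdeal.jacobson_bot_le_of_isMaxTwoSided hP (he 1)
  exact P.add_sub_mul_mem_iff he_P f
end

section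
/- Let R be a ring. An element a ∈ R is feckly clean if and only if there exists e ∈ R with eR(1-e) ⊆ J(R) such that every maximal ideal containing a-1 contains e, and no maximal ideal containing a contains e. -/
/-!
Modulo a maximal two-sided ideal `P` the condition `eR(1-e) ⊆ J(R) ⊆ P` says that `P` contains
`e` or `1 - e`, because maximal two-sided ideals are prime. For `a = e + u` with `u` full, `u` lies
in no maximal ideal; so `a - 1 ∈ P` forces `u ≡ 1 - e ∉ P`, whence `e ∈ P`, and `a ∈ P` forces
`e ∉ P`. Conversely, for `u := a - e`, a maximal ideal `P ∋ u` would contain `e` (then `a ∈ P`) or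
`1 - e` (then `a - 1 ∈ P`, so `e ∈ P` and `1 ∈ P`); hence `u` is full.
-/

section

variable {R : Type*} [Ring R]

lemma isMaxTwoSided_iff_isCoatom {P : TwoSidedIdeal R} : IsMaxTwoSided P ↔ IsCoatom P := Iff.rfl

lemma inJac_iff_mem_jacobson_bot {x : R} : InJac x ↔ x ∈ TwoSidedIdeal.jacobson ⊥ := by
  simp [InJac, Ideal.mem_jacobson_iff, TwoSidedIdeal.mem_jacobson_iff]

namespace TwoSidedIdeal

instance : IsCoatomic (TwoSidedIdeal R) := by
  refine .of_isChain_bounded fun c hc ⟨Q₀, hQ₀⟩ htop => ?_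
  let U : TwoSidedIdeal R := .mk' {x | ∃ Q ∈ c, x ∈ Q} ⟨Q₀, hQ₀, Q₀.zero_mem⟩
    (by
      rintro x y ⟨Q₁, h₁, hx⟩ ⟨Q₂, h₂, hy⟩
      obtain ⟨Q, hQ, h₁Q, h₂Q⟩ := hc.directedOn Q₁ h₁ Q₂ h₂
      exact ⟨Q, hQ, Q.add_mem (h₁Q hx) (h₂Q hy)⟩)
    (fun ⟨Q, hQ, hx⟩ => ⟨Q, hQ, Q.neg_mem hx⟩)
    (fun {x y} ⟨Q, hQ, hy⟩ => ⟨Q, hQ, Q.mul_mem_left x y hy⟩)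
    (fun {x y} ⟨Q, hQ, hx⟩ => ⟨Q, hQ, Q.mul_mem_right x y hx⟩)
  have mem_U {x : R} : x ∈ U ↔ ∃ Q ∈ c, x ∈ Q := TwoSidedIdeal.mem_mk' ..
  refine ⟨U, fun hU => ?_, fun Q hQ x hx => mem_U.2 ⟨Q, hQ, hx⟩⟩
  obtain ⟨Q, hQ, h1⟩ := mem_U.1 (hU ▸ trivial : (1 : R) ∈ U)
  exact htop ((one_mem_iff Q).1 h1 ▸ hQ)

def colon (I : TwoSidedIdeal R) (d : R) : TwoSidedIdeal R :=
  .mk' {z | ∀ x, z * x * d ∈ I} (fun x => by simp)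
    (fun hz hw x => by simpa [add_mul] using I.add_mem (hz x) (hw x))
    (fun hz x => by simpa using I.neg_mem (hz x))
    (fun {y z} hz x => by simpa [mul_assoc] using I.mul_mem_left y _ (hz x))
    (fun {z y} hz x => by simpa [mul_assoc] using hz (y * x))

lemma mem_colon {I : TwoSidedIdeal R} {d z : R} : z ∈ I.colon d ↔ ∀ x, z * x * d ∈ I := by
  simp [colon]

lemma le_colon (I : TwoSidedIdeal R) (d : R) : I ≤ I.colon d :=
  fun _ hz => mem_colon.2 fun x => I.mul_mem_right _ d (I.mul_mem_right _ x hz)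

end TwoSidedIdeal

namespace IsMaxTwoSided

open TwoSidedIdeal

variable {P : TwoSidedIdeal R}

lemma one_notMem (hP : IsMaxTwoSided P) : (1 : R) ∉ P :=
  fun h => hP.1 ((one_mem_iff P).1 h)

lemma mem_or_mem (hP : IsMaxTwoSided P) {c d : R} (h : ∀ x, c * x * d ∈ P) : c ∈ P ∨ d ∈ P := by
  refine or_iff_not_imp_left.2 fun hc => ?_
  have hlt : P < P.colon d := lt_of_le_of_ne (le_colon P d) fun hPd => hc (hPd ▸ mem_colon.2 h)
  have h1 : (1 : R) ∈ P.colon d := by rw [hP.2 _ hlt]; trivial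
  simpa using mem_colon.1 h1 1

lemma jacobson_bot_le (hP : IsMaxTwoSided P) : jacobson ⊥ ≤ P := by
  by_contra hJ
  have hsup : P ⊔ jacobson ⊥ = ⊤ := hP.2 _ (left_lt_sup.2 hJ)
  obtain ⟨p, hp, j, hj, hpj⟩ := mem_sup.1 (hsup ▸ mem_top (x := (1 : R)))
  -- `j ∈ J(R)` makes `p = 1 - j` left invertible.
  obtain ⟨z, hz⟩ := mem_jacobson_iff.1 hj (-1)
  have hzp : z * p = 1 := by
    rw [mem_bot] at hz
    calc z * p = z * -1 * j + z - 1 + 1 := by rw [eq_sub_of_add_eq hpj]; noncomm_ring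
      _ = 1 := by rw [hz, zero_add]
  exact hP.one_notMem (hzp ▸ P.mul_mem_left z p hp)

lemma mem_of_inJac (hP : IsMaxTwoSided P) {x : R} (hx : InJac x) : x ∈ P :=
  hP.jacobson_bot_le (inJac_iff_mem_jacobson_bot.1 hx)

lemma mem_or_one_sub_mem (hP : IsMaxTwoSided P) {e : R} (he : ∀ r, InJac (e * r * (1 - e))) :
    e ∈ P ∨ 1 - e ∈ P :=
  hP.mem_or_mem fun r => hP.mem_of_inJac (he r)

end IsMaxTwoSided

lemma isFullElem_iff_forall_notMem {u : R} :
    IsFullElem u ↔ ∀ P : TwoSidedIdeal R, IsMaxTwoSided P → u ∉ P := by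
  refine ⟨fun hu P hP huP => hP.1 (top_le_iff.1 (hu ▸ TwoSidedIdeal.span_le.2 (by simpa))),
    fun h => ?_⟩
  obtain hu | ⟨P, hP, hle⟩ := eq_top_or_exists_le_coatom (TwoSidedIdeal.span ({u} : Set R))
  · exact hu
  · exact absurd (hle (TwoSidedIdeal.subset_span rfl)) (h P (isMaxTwoSided_iff_isCoatom.2 hP))

end

theorem stmt4 {R : Type*} [Ring R] (a : R) :
    FecklyCleanElem a ↔ ∃ e : R, (∀ r : R, InJac (e * r * (1 - e))) ∧
      (∀ P : TwoSidedIdeal R, IsMaxTwoSided P → a - 1 ∈ P → e ∈ P) ∧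
      (∀ P : TwoSidedIdeal R, IsMaxTwoSided P → a ∈ P → e ∉ P) := by
  constructor
  · rintro ⟨e, u, rfl, hu, hJ⟩
    have hu' := isFullElem_iff_forall_notMem.1 hu
    refine ⟨e, hJ, fun P hP ha1 => ?_, fun P hP ha he => hu' P hP ?_⟩
    · refine (hP.mem_or_mem fun x => ?_).resolve_right (hu' P hP)
      have : e * x * u = e * x * (e + u - 1) + e * x * (1 - e) := by noncomm_ring
      exact this ▸ add_mem (P.mul_mem_left _ _ ha1) (hP.mem_of_inJac (hJ x))
    · simpa using sub_mem ha he
  · rintro ⟨e, hJ, h1, h2⟩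
    refine ⟨e, a - e, by abel, isFullElem_iff_forall_notMem.2 fun P hP hu => ?_, hJ⟩
    rcases hP.mem_or_one_sub_mem hJ with he | he
    · exact h2 P hP (by simpa using add_mem hu he) he
    · have ha1 : a - 1 ∈ P := by simpa using sub_mem hu he
      exact hP.one_notMem (by simpa using add_mem (h1 P hP ha1) he)
end

section
/- Let R be a ring in which a + b = 1 implies that there exist r, s ∈ R and e ∈ R with 1 + ar ∈ eR, 1 + bs ∈ (1-e)R and eR(1-e) ⊆ J(R). Then R is feckly clean. -/
/-!
Write `a = e + u` with `u = a - e`, where `e` comes from the hypothesis applied to `a + (1 - a) = 1`.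
Modulo the ideal `I = RuR` we have `a ≡ e`, so `1 ∈ eR + I` and `1 ∈ (1 - e)R + I`. Multiplying,
`1 ≡ ec(1 - e)d` for some `c, d`, and `ec(1 - e)d ∈ J(R)`; hence `I` contains `1 - j` with
`j ∈ J(R)`, which is left invertible, so `I = R`.
-/

section

variable {R : Type*} [Ring R]

lemma exists_mul_one_sub_eq_one_of_inJac {x : R} (hx : InJac x) : ∃ z, z * (1 - x) = 1 := by
  obtain ⟨z, hz⟩ := Ideal.mem_jacobson_iff.1 hx (-1)
  rw [Ideal.mem_bot, sub_eq_zero] at hz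
  exact ⟨z, by rw [mul_sub, mul_one, ← hz]; noncomm_ring⟩

namespace TwoSidedIdeal

lemma eq_top_of_one_sub_mem_of_inJac {I : TwoSidedIdeal R} {x : R} (hx : InJac x)
    (h : 1 - x ∈ I) : I = ⊤ := by
  obtain ⟨z, hz⟩ := exists_mul_one_sub_eq_one_of_inJac hx
  exact I.eq_top (hz ▸ I.mul_mem_left z _ h)

lemma eq_top_of_one_sub_mul_mem_of_corner_inJac {I : TwoSidedIdeal R} {e c d : R}
    (hJ : ∀ x, InJac (e * x * (1 - e))) (hc : 1 - e * c ∈ I) (hd : 1 - (1 - e) * d ∈ I) :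
    I = ⊤ := by
  have hj : InJac (e * c * (1 - e) * d) := Ideal.mul_mem_right d _ (hJ c)
  refine eq_top_of_one_sub_mem_of_inJac hj ?_
  have hsplit : 1 - e * c * (1 - e) * d = (1 - e * c) + e * c * (1 - (1 - e) * d) := by
    noncomm_ring
  rw [hsplit]
  exact I.add_mem hc (I.mul_mem_left _ _ hd)

lemma one_sub_mul_sub_mem {I : TwoSidedIdeal R} {a e r t : R} (hae : a - e ∈ I)
    (h : 1 + a * r = e * t) : 1 - e * (t - r) ∈ I := by
  have hrw : 1 - e * (t - r) = -((a - e) * r) := by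
    rw [mul_sub, ← h]; noncomm_ring
  rw [hrw]
  exact I.neg_mem (I.mul_mem_right _ _ hae)

end TwoSidedIdeal

end

theorem stmt7 {R : Type*} [Ring R]
    (h : ∀ a b : R, a + b = 1 → ∃ r s e : R,
      (∃ t : R, 1 + a * r = e * t) ∧ (∃ t : R, 1 + b * s = (1 - e) * t) ∧
      ∀ x : R, InJac (e * x * (1 - e))) :
    FecklyCleanRing R := by
  intro a
  obtain ⟨r, s, e, ⟨t₁, ht₁⟩, ⟨t₂, ht₂⟩, hJ⟩ := h a (1 - a) (add_sub_cancel a 1)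
  refine ⟨e, a - e, (add_sub_cancel e a).symm, ?_, hJ⟩
  set I := TwoSidedIdeal.span ({a - e} : Set R)
  have hu : a - e ∈ I := TwoSidedIdeal.subset_span rfl
  have hu' : (1 - a) - (1 - e) ∈ I := by
    rw [sub_sub_sub_cancel_left, ← neg_sub]
    exact neg_mem hu
  exact TwoSidedIdeal.eq_top_of_one_sub_mul_mem_of_corner_inJac hJ
    (TwoSidedIdeal.one_sub_mul_sub_mem hu ht₁) (TwoSidedIdeal.one_sub_mul_sub_mem hu' ht₂)
end

section
/- If R is a feckly clean ring, then every prime ideal of R containing J(R) is contained in exactly one maximal ideal. -/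
lemma span_singleton_le_iff {R : Type*} [Ring R] {u : R} {M : TwoSidedIdeal R}
    (hu : u ∈ M) : TwoSidedIdeal.span ({u} : Set R) ≤ M := by
  intro x hx
  rw [TwoSidedIdeal.mem_span_iff] at hx
  exact hx M (by simpa using hu)

/-- Key lemma: two maximal two-sided ideals containing a prime ideal over J coincide. -/
lemma unique_max {R : Type*} [Ring R] (hR : FecklyCleanRing R) (P : TwoSidedIdeal R)
    (hprime : ∀ I K : TwoSidedIdeal R, (∀ x ∈ I, ∀ y ∈ K, x * y ∈ P) → I ≤ P ∨ K ≤ P)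
    (hJ : ∀ x : R, InJac x → x ∈ P)
    (M N : TwoSidedIdeal R) (hM : IsMaxTwoSided M) (hN : IsMaxTwoSided N)
    (hPM : P ≤ M) (hPN : P ≤ N) : M = N := by
  by_contra hMN
  -- M ⊔ N = ⊤
  have hsup : M ⊔ N = ⊤ := by
    apply hM.2
    refine lt_of_le_of_ne le_sup_left ?_
    intro h
    have hNM : N ≤ M := h ▸ le_sup_right
    rcases eq_or_lt_of_le hNM with h' | h'
    · exact hMN h'.symm
    · exact hM.1 (hN.2 M h')
  -- the set of sums m + n is a two-sided ideal containing M ⊔ N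
  set S : TwoSidedIdeal R := TwoSidedIdeal.mk'
    {x | ∃ m ∈ M, ∃ n ∈ N, x = m + n}
    ⟨0, M.zero_mem, 0, N.zero_mem, (zero_add 0).symm⟩
    (fun {x y} ⟨m1, hm1, n1, hn1, hx⟩ ⟨m2, hm2, n2, hn2, hy⟩ =>
      ⟨m1 + m2, M.add_mem hm1 hm2, n1 + n2, N.add_mem hn1 hn2, by rw [hx, hy]; abel⟩)
    (fun {x} ⟨m, hm, n, hn, hx⟩ => ⟨-m, M.neg_mem hm, -n, N.neg_mem hn, by rw [hx]; abel⟩)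
    (fun {x y} ⟨m, hm, n, hn, hy⟩ =>
      ⟨x * m, M.mul_mem_left x m hm, x * n, N.mul_mem_left x n hn, by rw [hy]; noncomm_ring⟩)
    (fun {x y} ⟨m, hm, n, hn, hx⟩ =>
      ⟨m * y, M.mul_mem_right m y hm, n * y, N.mul_mem_right n y hn, by rw [hx]; noncomm_ring⟩)
    with hS
  have hMS : M ≤ S := fun x hx => by
    rw [hS, TwoSidedIdeal.mem_mk']; exact ⟨x, hx, 0, N.zero_mem, (add_zero x).symm⟩
  have hNS : N ≤ S := fun x hx => by
    rw [hS, TwoSidedIdeal.mem_mk']; exact ⟨0, M.zero_mem, x, hx, (zero_add x).symm⟩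
  have h1 : (1 : R) ∈ S := by
    have : M ⊔ N ≤ S := sup_le hMS hNS
    exact this (hsup ▸ (TwoSidedIdeal.one_mem_iff ⊤).mpr rfl)
  rw [hS, TwoSidedIdeal.mem_mk'] at h1
  obtain ⟨a, haM, b, hbN, hab⟩ := h1
  -- decompose a
  obtain ⟨e, u, hae, hu, hfe⟩ := hR a
  -- K is the span of 1 - e ; every element k of K satisfies e * r * k ∈ P
  set K : TwoSidedIdeal R := TwoSidedIdeal.span ({1 - e} : Set R) with hKdef
  have hK : ∀ k ∈ K, ∀ r : R, e * r * k ∈ P := by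
    intro k hk
    set K'' : TwoSidedIdeal R := TwoSidedIdeal.mk'
      {k | ∀ r : R, e * r * k ∈ P}
      (fun r => by simpa using P.zero_mem)
      (fun {x y} hx hy r => by
        have : e * r * (x + y) = e * r * x + e * r * y := by noncomm_ring
        rw [this]; exact P.add_mem (hx r) (hy r))
      (fun {x} hx r => by
        have : e * r * (-x) = -(e * r * x) := by noncomm_ring
        rw [this]; exact P.neg_mem (hx r))
      (fun {x y} hy r => by
        have : e * r * (x * y) = e * (r * x) * y := by noncomm_ring
        rw [this]; exact hy (r * x))
      (fun {x y} hx r => by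
        have : e * r * (x * y) = (e * r * x) * y := by noncomm_ring
        rw [this]; exact P.mul_mem_right _ y (hx r))
      with hK''
    have hkK'' : k ∈ K'' := by
      rw [hKdef, TwoSidedIdeal.mem_span_iff] at hk
      exact hk K'' (by
        intro z hz
        simp only [Set.mem_singleton_iff] at hz
        subst hz
        rw [hK'', SetLike.mem_coe, TwoSidedIdeal.mem_mk']
        exact fun r => hJ _ (hfe r))
    rw [hK'', TwoSidedIdeal.mem_mk'] at hkK''
    exact hkK''
  -- I := left annihilator of K modulo P
  set I : TwoSidedIdeal R := TwoSidedIdeal.mk'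
    {x | ∀ y ∈ K, x * y ∈ P}
    (fun y _ => by simpa using P.zero_mem)
    (fun {x z} hx hz y hy => by
      rw [add_mul]; exact P.add_mem (hx y hy) (hz y hy))
    (fun {x} hx y hy => by
      rw [neg_mul]; exact P.neg_mem (hx y hy))
    (fun {x z} hz y hy => by
      rw [mul_assoc]; exact P.mul_mem_left x _ (hz y hy))
    (fun {x z} hx y hy => by
      rw [mul_assoc]; exact hx (z * y) (K.mul_mem_left z y hy))
    with hI
  have heI : e ∈ I := by
    rw [hI, TwoSidedIdeal.mem_mk']
    intro y hy
    have := hK y hy 1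
    rwa [mul_one] at this
  have hek : I ≤ P ∨ K ≤ P := by
    apply hprime
    intro x hx y hy
    rw [hI, TwoSidedIdeal.mem_mk'] at hx
    exact hx y hy
  rcases hek with hcase | hcase
  · -- e ∈ P ⊆ M, so u = a - e ∈ M, M = ⊤, contradiction
    have heM : e ∈ M := hPM (hcase heI)
    have huM : u ∈ M := by
      have : u = a - e := by rw [hae]; noncomm_ring
      rw [this]; exact M.sub_mem haM heM
    exact hM.1 (top_le_iff.mp (hu ▸ span_singleton_le_iff huM))
  · -- 1 - e ∈ P ⊆ N, and 1 - a = b ∈ N, so u = (1-e) - (1-a) ∈ N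
    have h1e : (1 : R) - e ∈ N := hPN (hcase (TwoSidedIdeal.subset_span rfl))
    have h1a : (1 : R) - a ∈ N := by
      have : (1 : R) - a = b := by rw [hab]; noncomm_ring
      rw [this]; exact hbN
    have huN : u ∈ N := by
      have : u = (1 - e) - (1 - a) := by rw [hae]; noncomm_ring
      rw [this]; exact N.sub_mem h1e h1a
    exact hN.1 (top_le_iff.mp (hu ▸ span_singleton_le_iff huN))

theorem stmt9 {R : Type*} [Ring R] (hR : FecklyCleanRing R) (P : TwoSidedIdeal R)
    (hP : P ≠ ⊤)
    (hprime : ∀ I K : TwoSidedIdeal R, (∀ x ∈ I, ∀ y ∈ K, x * y ∈ P) → I ≤ P ∨ K ≤ P)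
    (hJ : ∀ x : R, InJac x → x ∈ P) :
    ∃! M : TwoSidedIdeal R, IsMaxTwoSided M ∧ P ≤ M := by
  -- Existence of a maximal ideal containing P, via Zorn
  set s : Set (TwoSidedIdeal R) := {Q | P ≤ Q ∧ Q ≠ ⊤} with hs
  have hzorn : ∃ m, P ≤ m ∧ Maximal (· ∈ s) m := by
    apply zorn_le_nonempty₀ s ?_ P ⟨le_rfl, hP⟩
    intro c hcs hc y hy
    refine ⟨TwoSidedIdeal.mk' (⋃ Q ∈ c, (Q : Set R))
      (Set.mem_biUnion hy y.zero_mem) ?_ ?_ ?_ ?_, ⟨?_, ?_⟩, ?_⟩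
    · rintro x z hx hz
      obtain ⟨Q1, hQ1, hx⟩ := Set.mem_iUnion₂.mp hx
      obtain ⟨Q2, hQ2, hz⟩ := Set.mem_iUnion₂.mp hz
      rcases hc.total hQ1 hQ2 with h | h
      · exact Set.mem_biUnion hQ2 (Q2.add_mem (h hx) hz)
      · exact Set.mem_biUnion hQ1 (Q1.add_mem hx (h hz))
    · rintro x hx
      obtain ⟨Q, hQ, hx⟩ := Set.mem_iUnion₂.mp hx
      exact Set.mem_biUnion hQ (Q.neg_mem hx)
    · rintro x z hz
      obtain ⟨Q, hQ, hz⟩ := Set.mem_iUnion₂.mp hz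
      exact Set.mem_biUnion hQ (Q.mul_mem_left x z hz)
    · rintro x z hx
      obtain ⟨Q, hQ, hx⟩ := Set.mem_iUnion₂.mp hx
      exact Set.mem_biUnion hQ (Q.mul_mem_right x z hx)
    · -- P ≤ ub
      intro x hx
      rw [TwoSidedIdeal.mem_mk']
      exact Set.mem_biUnion hy ((hcs hy).1 hx)
    · -- ub ≠ ⊤
      intro h
      have h1 : (1 : R) ∈ (⋃ Q ∈ c, (Q : Set R)) := by
        have := (TwoSidedIdeal.one_mem_iff _).mpr h
        rwa [TwoSidedIdeal.mem_mk'] at this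
      obtain ⟨Q, hQ, h1⟩ := Set.mem_iUnion₂.mp h1
      exact (hcs hQ).2 ((TwoSidedIdeal.one_mem_iff Q).mp h1)
    · -- upper bound
      intro z hz x hx
      rw [TwoSidedIdeal.mem_mk']
      exact Set.mem_biUnion hz hx
  obtain ⟨M, hPM, hMmax⟩ := hzorn
  have hMs : M ∈ s := hMmax.prop
  have hMismax : IsMaxTwoSided M := by
    refine ⟨hMs.2, fun Q hQ => ?_⟩
    by_contra hQtop
    have hQs : Q ∈ s := ⟨hPM.trans hQ.le, hQtop⟩
    exact hQ.ne (hMmax.eq_of_le hQs hQ.le)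
  exact ⟨M, ⟨hMismax, hPM⟩, fun N hN =>
    unique_max hR P hprime hJ N M hN.1 hMismax hN.2 hPM⟩
end

section
/- Let R be a ring such that for any distinct maximal ideals M and N, there exist a, b ∈ R with a ∉ M, b ∉ N and aRb ⊆ J(R). Then every prime ideal of R containing J(R) is contained in a unique maximal ideal. -/
theorem stmt10 {R : Type*} [Ring R]
    (h : ∀ M N : TwoSidedIdeal R, IsMaxTwoSided M → IsMaxTwoSided N → M ≠ N →
      ∃ a b : R, a ∉ M ∧ b ∉ N ∧ ∀ r : R, InJac (a * r * b))
    (P : TwoSidedIdeal R) (hP : P ≠ ⊤)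
    (hprime : ∀ x y : R, (∀ r : R, x * r * y ∈ P) → x ∈ P ∨ y ∈ P)
    (hJ : ∀ x : R, InJac x → x ∈ P) :
    ∃! M : TwoSidedIdeal R, IsMaxTwoSided M ∧ P ≤ M := by
  -- existence of a maximal ideal above P via Zorn
  set S : Set (TwoSidedIdeal R) := {Q | Q ≠ ⊤}
  have hPS : P ∈ S := hP
  obtain ⟨M, hPM, hMmax⟩ :
      ∃ M, P ≤ M ∧ Maximal (· ∈ S) M := by
    apply zorn_le_nonempty₀ S ?_ P hPS
    intro c hcS hchain Q hQ
    -- upper bound: union of the chain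
    set U : Set R := ⋃ I ∈ c, (I : Set R)
    have hmem : ∀ {x : R}, x ∈ U ↔ ∃ I ∈ c, x ∈ I := by
      intro x; simp [U]
    refine ⟨TwoSidedIdeal.mk' U ?_ ?_ ?_ ?_ ?_, ?_, ?_⟩
    · exact hmem.2 ⟨Q, hQ, Q.zero_mem⟩
    · intro x y hx hy
      obtain ⟨I, hI, hxI⟩ := hmem.1 hx
      obtain ⟨I', hI', hyI'⟩ := hmem.1 hy
      rcases hchain.total hI hI' with hle | hle
      · exact hmem.2 ⟨I', hI', I'.add_mem (hle hxI) hyI'⟩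
      · exact hmem.2 ⟨I, hI, I.add_mem hxI (hle hyI')⟩
    · intro x hx
      obtain ⟨I, hI, hxI⟩ := hmem.1 hx
      exact hmem.2 ⟨I, hI, I.neg_mem hxI⟩
    · intro x y hy
      obtain ⟨I, hI, hyI⟩ := hmem.1 hy
      exact hmem.2 ⟨I, hI, I.mul_mem_left x y hyI⟩
    · intro x y hx
      obtain ⟨I, hI, hxI⟩ := hmem.1 hx
      exact hmem.2 ⟨I, hI, I.mul_mem_right x y hxI⟩
    · -- proper
      intro htop
      have h1 : (1 : R) ∈ TwoSidedIdeal.mk' U _ _ _ _ _ := (TwoSidedIdeal.one_mem_iff _).2 htop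
      rw [TwoSidedIdeal.mem_mk'] at h1
      obtain ⟨I, hI, h1I⟩ := hmem.1 h1
      exact hcS hI (I.eq_top h1I)
    · intro I hI x hx
      rw [TwoSidedIdeal.mem_mk']
      exact hmem.2 ⟨I, hI, hx⟩
  have hMmax' : IsMaxTwoSided M := by
    refine ⟨hMmax.prop, fun Q hMQ => ?_⟩
    by_contra hQtop
    exact absurd (hMmax.le_of_ge (show Q ∈ S from hQtop) hMQ.le) (not_le_of_gt hMQ)
  refine ⟨M, ⟨hMmax', hPM⟩, ?_⟩
  rintro N ⟨hNmax, hPN⟩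
  by_contra hne
  obtain ⟨a, b, haN, hbM, hab⟩ := h N M hNmax hMmax' hne
  have : a ∈ P ∨ b ∈ P := hprime a b fun r => hJ _ (hab r)
  rcases this with ha | hb
  · exact haN (hPN ha)
  · exact hbM (hPM hb)
end

section
/- If R/J(R) is an abelian π-regular ring, then R is feckly clean. -/
/-!
Let `b` be the image of `a` in `R ⧸ J`. Since `bⁿ = bⁿ s bⁿ`, the element `E = bⁿ s` is an
idempotent, central because `R ⧸ J` is abelian. On the corner `E`, `b` is invertible (with
inverse `bⁿ⁻¹ s E`); on the corner `1 - E`, `b` is nilpotent, so `b - 1` is inverted by a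
geometric series. Hence `b - (1 - E)` has a right inverse. Lift `1 - E` to `e ∈ R`: the corners
`e R (1 - e)` vanish modulo `J`, and `u = a - e` is right invertible modulo `J ⊆ J(R)`, so
`z u r = 1` for some `z, r`, i.e. `u` is full.
-/

theorem TwoSidedIdeal.coe_eq_zero_iff {R : Type*} [NonUnitalNonAssocRing R]
    {I : TwoSidedIdeal R} {x : R} : (x : I.ringCon.Quotient) = 0 ↔ x ∈ I := by
  rw [← RingCon.coe_zero, RingCon.eq, I.rel_iff, sub_zero]

theorem isFullElem_of_mul_sub_one_mem_jacobson {R : Type*} [Ring R] {u r : R}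
    (h : InJac (u * r - 1)) : IsFullElem u := by
  obtain ⟨z, hz⟩ := Ideal.exists_mul_sub_mem_of_sub_one_mem_jacobson _ h
  rw [Ideal.mem_bot, sub_eq_zero, ← mul_assoc] at hz
  refine TwoSidedIdeal.eq_top _ (hz ▸ ?_)
  exact TwoSidedIdeal.mul_mem_right _ _ _
    (TwoSidedIdeal.mul_mem_left _ _ _ (TwoSidedIdeal.subset_span rfl))

theorem IsIdempotentElem.mul_mul_one_sub_eq_zero_of_commute {R : Type*} [Ring R] {f x : R}
    (hf : IsIdempotentElem f) (hx : Commute f x) : f * x * (1 - f) = 0 := by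
  rw [hx.eq, mul_assoc, hf.mul_one_sub_self, mul_zero]

theorem exists_sub_one_sub_mul_eq_one {Q : Type*} [Ring Q] {b s E : Q} {m : ℕ}
    (hE : b ^ (m + 1) * s = E) (hEb : E * b ^ (m + 1) = b ^ (m + 1)) (hc : ∀ x, Commute E x) :
    ∃ y, (b - (1 - E)) * y = 1 := by
  have hEE : IsIdempotentElem E := by
    rw [IsIdempotentElem]
    nth_rw 2 [← hE]
    rw [← mul_assoc, hEb, hE]
  set S := ∑ i ∈ Finset.range (m + 1), b ^ i
  have hunit : (b - (1 - E)) * (b ^ m * s * E) = E := by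
    rw [sub_mul, ← mul_assoc, ← mul_assoc, ← pow_succ', hE, hEE.eq,
      ← (hc (b ^ m * s)).eq, ← mul_assoc, hEE.one_sub_mul_self, zero_mul, sub_zero]
  have hnil : (b - (1 - E)) * (S * (1 - E)) = E - 1 := by
    have hbE : b ^ (m + 1) * (1 - E) = 0 := by rw [mul_one_sub, ← (hc _).eq, hEb, sub_self]
    have hES : E * (S * (1 - E)) = 0 := by
      rw [← mul_assoc, (hc S).eq, mul_assoc, hEE.mul_one_sub_self, mul_zero]
    calc (b - (1 - E)) * (S * (1 - E))
        = (b - 1) * S * (1 - E) + E * (S * (1 - E)) := by noncomm_ring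
      _ = E - 1 := by rw [mul_geom_sum, hES, sub_mul, hbE]; noncomm_ring
  exact ⟨b ^ m * s * E - S * (1 - E), by rw [mul_sub, hunit, hnil, sub_sub_cancel]⟩

theorem stmt11 {R : Type*} [Ring R] (J : TwoSidedIdeal R)
    (hJ : ∀ x : R, x ∈ J ↔ InJac x)
    (hab : ∀ e : J.ringCon.Quotient, e * e = e → ∀ x : J.ringCon.Quotient, e * x = x * e)
    (hpi : ∀ a : J.ringCon.Quotient, ∃ n : ℕ, 1 ≤ n ∧
      ∃ s : J.ringCon.Quotient, a ^ n = a ^ n * s * a ^ n) :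
    FecklyCleanRing R := by
  intro a
  obtain ⟨n, hn, s, hs⟩ := hpi a
  obtain ⟨m, rfl⟩ := Nat.exists_eq_add_of_le' hn
  set E := (a : J.ringCon.Quotient) ^ (m + 1) * s
  have hEE : IsIdempotentElem E := by rw [IsIdempotentElem, ← mul_assoc, ← hs]
  have hEc : ∀ x, Commute E x := hab E hEE
  obtain ⟨y, hy⟩ : ∃ y, ((a : J.ringCon.Quotient) - (1 - E)) * y = 1 :=
    exists_sub_one_sub_mul_eq_one rfl hs.symm hEc
  obtain ⟨e, he⟩ : ∃ e : R, (e : J.ringCon.Quotient) = 1 - E := RingCon.mk'_surjective _ _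
  obtain ⟨r, rfl⟩ : ∃ r : R, (r : J.ringCon.Quotient) = y := RingCon.mk'_surjective _ _
  refine ⟨e, a - e, (add_sub_cancel e a).symm, isFullElem_of_mul_sub_one_mem_jacobson (r := r) ?_,
    fun x => (hJ _).mp (TwoSidedIdeal.coe_eq_zero_iff.mp ?_)⟩
  · refine (hJ _).mp (TwoSidedIdeal.coe_eq_zero_iff.mp ?_)
    push_cast
    rw [he, hy, sub_self]
  · push_cast
    rw [he]
    exact hEE.one_sub.mul_mul_one_sub_eq_zero_of_commute ((Commute.one_left _).sub_left (hEc _))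
end

section
/- Let R be a ring such that for every x ∈ R there exists n(x) ≥ 2 with xRx = x^{n(x)}Rx^{n(x)} (a gsr-ring). Then R/J(R) is reduced. -/
/-!
If `a² ∈ J(R)` and `aRa = aⁿRaⁿ` with `n ≥ 2`, then `aRa ⊆ aⁿR ⊆ J(R)`. The Jacobson radical is
semiprime: if `aRa ⊆ J(R)` then for every `y` the element `w = ya` has `w² = y(aya) ∈ J(R)`, so
`1 - w²` has a left inverse `z`, and `z(1 - w)` is a left inverse of `1 + ya`; hence `a ∈ J(R)`.
-/

namespace Ideal

variable {R : Type*} [Ring R] {I : Ideal R}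

theorem exists_mul_one_add_sub_one_mem_of_mul_self_mem_jacobson {w : R}
    (hw : w * w ∈ I.jacobson) : ∃ z, z * (1 + w) - 1 ∈ I := by
  obtain ⟨z, hz⟩ := mem_jacobson_iff.1 hw (-1)
  refine ⟨z * (1 - w), ?_⟩
  have h : z * (1 - w) * (1 + w) - 1 = z * -1 * (w * w) + z - 1 := by noncomm_ring
  rwa [h]

theorem mem_jacobson_of_forall_mul_mul_mem {a : R} (h : ∀ r, a * r * a ∈ I.jacobson) :
    a ∈ I.jacobson := by
  refine mem_jacobson_iff.2 fun y => ?_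
  have hsq : y * a * (y * a) ∈ I.jacobson := by
    rw [show y * a * (y * a) = y * (a * y * a) by noncomm_ring]
    exact I.jacobson.mul_mem_left y (h y)
  obtain ⟨z, hz⟩ := exists_mul_one_add_sub_one_mem_of_mul_self_mem_jacobson hsq
  exact ⟨z, by rwa [show z * y * a + z - 1 = z * (1 + y * a) - 1 by noncomm_ring]⟩

end Ideal

namespace TwoSidedIdeal

variable {R : Type*} [Ring R]

theorem coe_ringCon_eq_zero_iff (I : TwoSidedIdeal R) (a : R) :
    (a : I.ringCon.Quotient) = 0 ↔ a ∈ I := by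
  rw [← RingCon.coe_zero, RingCon.eq, mem_iff]

theorem mul_mul_mem_of_sq_mem_of_subset {I : TwoSidedIdeal R} {a : R} {n : ℕ} (hn : 2 ≤ n)
    (hsub : {y : R | ∃ r, y = a * r * a} ⊆ {y : R | ∃ r, y = a ^ n * r * a ^ n})
    (ha : a ^ 2 ∈ I) (r : R) : a * r * a ∈ I := by
  have hpow : a ^ n ∈ I := by
    rw [← Nat.sub_add_cancel hn, pow_add]
    exact I.mul_mem_left _ _ ha
  obtain ⟨s, hs⟩ := hsub ⟨r, rfl⟩
  rw [hs]
  exact I.mul_mem_right _ _ (I.mul_mem_right _ _ hpow)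

end TwoSidedIdeal

theorem stmt12 {R : Type*} [Ring R]
    (h : ∀ x : R, ∃ n : ℕ, 2 ≤ n ∧
      {y : R | ∃ r : R, y = x * r * x} = {y : R | ∃ r : R, y = x ^ n * r * x ^ n})
    (J : TwoSidedIdeal R) (hJ : ∀ x : R, x ∈ J ↔ InJac x) :
    ∀ x : J.ringCon.Quotient, x ^ 2 = 0 → x = 0 := by
  intro x hx
  induction x using Quotient.inductionOn' with
  | h a =>
  obtain ⟨n, hn, hset⟩ := h a
  have ha2 : a ^ 2 ∈ J := by
    rwa [← J.coe_ringCon_eq_zero_iff, RingCon.coe_pow]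
  have haJac : InJac a := Ideal.mem_jacobson_of_forall_mul_mul_mem fun r =>
    (hJ _).1 (TwoSidedIdeal.mul_mul_mem_of_sq_mem_of_subset hn hset.le ha2 r)
  exact (J.coe_ringCon_eq_zero_iff a).2 ((hJ a).2 haJac)
end

section
/- If for every a ∈ R there exists an integer n ≥ 2 such that aⁿ - a ∈ J(R), then R is feckly clean. -/
/-!
Write `a ^ (m + 2) ≡ a` modulo `J = J(R)` and put `f = a ^ (m + 1)`, so that `f ^ 2 ≡ f`. Take
`e = 1 - f` and `u = a - 1 + f`. Modulo `J`, `u` is inverted on the left by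
`a ^ (2m + 1) - 1 + f`, and an element that is left invertible modulo `J` is left invertible,
hence full. For any `r`, `x = e r (1 - e)` satisfies `x ^ 2 ≡ 0` because `(1 - e) e ≡ 0`; together
with `x ^ p ≡ x` for some `p ≥ 2` this forces `x ∈ J`.
-/

open Polynomial

section

variable {R : Type*} [Ring R]

lemma pow_succ_mul_pow_succ_sub (a : R) (m : ℕ) :
    a ^ (m + 1) * a ^ (m + 1) - a ^ (m + 1) = a ^ m * (a ^ (m + 2) - a) := by
  have h : (X ^ (m + 1) * X ^ (m + 1) - X ^ (m + 1) : ℤ[X]) = X ^ m * (X ^ (m + 2) - X) := by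
    ring
  simpa using congrArg (aeval a) h

lemma mul_sub_one_add_pow_sub_one_eq (a : R) (m : ℕ) :
    (a ^ (2 * m + 1) - 1 + a ^ (m + 1)) * (a - 1 + a ^ (m + 1)) - 1 =
      (a ^ m + 1) ^ 2 * (a ^ (m + 2) - a) := by
  have h : ((X ^ (2 * m + 1) - 1 + X ^ (m + 1)) * (X - 1 + X ^ (m + 1)) - 1 : ℤ[X]) =
      (X ^ m + 1) ^ 2 * (X ^ (m + 2) - X) := by
    ring
  simpa using congrArg (aeval a) h

lemma isFullElem_of_mul_eq_one {u c : R} (h : c * u = 1) : IsFullElem u := by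
  refine (TwoSidedIdeal.one_mem_iff _).mp ?_
  rw [← h]
  exact TwoSidedIdeal.mul_mem_left _ c u (TwoSidedIdeal.subset_span rfl)

lemma isFullElem_of_mul_sub_one_injac {u v : R} (h : InJac (v * u - 1)) : IsFullElem u := by
  obtain ⟨s, hs⟩ := Ideal.exists_mul_sub_mem_of_sub_one_mem_jacobson (v * u) h
  rw [Ideal.mem_bot, sub_eq_zero, ← mul_assoc] at hs
  exact isFullElem_of_mul_eq_one hs

lemma injac_of_injac_sq {x : R} {p : ℕ} (hp : 2 ≤ p) (hsq : InJac (x * x))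
    (hx : InJac (x ^ p - x)) : InJac x := by
  obtain ⟨q, rfl⟩ : ∃ q, p = q + 2 := ⟨p - 2, by omega⟩
  have hpow : InJac (x ^ (q + 2)) := by
    rw [pow_add, pow_two]
    exact Ideal.mul_mem_left _ _ hsq
  have h := Ideal.sub_mem _ hpow hx
  rwa [sub_sub_cancel] at h

lemma injac_sq_mul_mul_one_sub {e : R} (he : InJac (e * e - e)) (r : R) :
    InJac (e * r * (1 - e) * (e * r * (1 - e))) := by
  have h : e * r * (1 - e) * (e * r * (1 - e)) = -(e * r * ((e * e - e) * (r * (1 - e)))) := by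
    noncomm_ring
  rw [h]
  exact neg_mem (Ideal.mul_mem_left _ _ (Ideal.mul_mem_right _ _ he))

lemma isFullElem_sub_one_add_pow {a : R} {m : ℕ} (ha : InJac (a ^ (m + 2) - a)) :
    IsFullElem (a - 1 + a ^ (m + 1)) := by
  refine isFullElem_of_mul_sub_one_injac (v := a ^ (2 * m + 1) - 1 + a ^ (m + 1)) ?_
  rw [mul_sub_one_add_pow_sub_one_eq]
  exact Ideal.mul_mem_left _ _ ha

lemma injac_one_sub_pow_sq_sub {a : R} {m : ℕ} (ha : InJac (a ^ (m + 2) - a)) :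
    InJac ((1 - a ^ (m + 1)) * (1 - a ^ (m + 1)) - (1 - a ^ (m + 1))) := by
  have h : (1 - a ^ (m + 1)) * (1 - a ^ (m + 1)) - (1 - a ^ (m + 1)) =
      a ^ (m + 1) * a ^ (m + 1) - a ^ (m + 1) := by
    noncomm_ring
  rw [h, pow_succ_mul_pow_succ_sub]
  exact Ideal.mul_mem_left _ _ ha

end

theorem stmt14 {R : Type*} [Ring R]
    (h : ∀ a : R, ∃ n : ℕ, 2 ≤ n ∧ InJac (a ^ n - a)) :
    FecklyCleanRing R := by
  intro a
  obtain ⟨n, hn, ha⟩ := h a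
  obtain ⟨m, rfl⟩ : ∃ m, n = m + 2 := ⟨n - 2, by omega⟩
  refine ⟨1 - a ^ (m + 1), a - 1 + a ^ (m + 1), by abel, isFullElem_sub_one_add_pow ha, ?_⟩
  intro r
  obtain ⟨p, hp, hx⟩ := h ((1 - a ^ (m + 1)) * r * (1 - (1 - a ^ (m + 1))))
  exact injac_of_injac_sq hp (injac_sq_mul_mul_one_sub (injac_one_sub_pow_sq_sub ha) r) hx
end

section
/- Let R be a commutative ring. Then R is feckly clean (i.e., for each a ∈ R there exist e ∈ R and a unit u with a = e + u and e² - e ∈ J(R)) if and only if for every a ∈ R there exists e ∈ R with a - e ∈ (a - a²)R and e - e² ∈ J(R). -/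
def FecklyCleanComm (R : Type*) [CommRing R] : Prop :=
  ∀ a : R, ∃ e u : R, IsUnit u ∧ a = e + u ∧ e ^ 2 - e ∈ Ideal.jacobson (⊥ : Ideal R)

theorem stmt15 {R : Type*} [CommRing R] :
    FecklyCleanComm R ↔ ∀ a : R, ∃ e : R,
      (∃ r : R, a - e = (a - a ^ 2) * r) ∧ e - e ^ 2 ∈ Ideal.jacobson (⊥ : Ideal R) := by
  constructor
  · intro h a
    obtain ⟨e, u, hu, ha, he⟩ := h a
    obtain ⟨ui, hui⟩ := hu.exists_right_inv
    subst ha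
    refine ⟨1 - e + ui * (e - e ^ 2), ⟨-ui, ?_⟩, ?_⟩
    · linear_combination (1 - 2*e - u) * hui
    · have key : (1 - e + ui * (e - e ^ 2)) - (1 - e + ui * (e - e ^ 2)) ^ 2
          = (-1 - (2*e - 1 - ui*(e - e^2))*ui) * (e ^ 2 - e) := by ring
      rw [key]
      exact Ideal.mul_mem_left _ _ he
  · intro h a
    obtain ⟨e, ⟨r, hr⟩, he⟩ := h a
    set u := a - 1 + e with hu_def
    set v := e * (1 - (1-a)*r) - (1 - e) * (1 + a*r) with hv_def
    have key : u * v = 1 + (e ^ 2 - e) * (4 - r + 2*a*r) := by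
      rw [hu_def, hv_def]
      linear_combination (2*e - 1) * hr
    have hmem : (e ^ 2 - e) * (4 - r + 2*a*r) ∈ Ideal.jacobson (⊥ : Ideal R) := by
      have : (e ^ 2 - e) * (4 - r + 2*a*r) = (-(4 - r + 2*a*r)) * (e - e ^ 2) := by ring
      rw [this]
      exact Ideal.mul_mem_left _ _ he
    have huv : IsUnit (u * v) := by
      rw [key]
      have := (Ideal.mem_jacobson_bot.mp hmem) 1
      simpa [add_comm] using this
    have hu : IsUnit u := isUnit_of_mul_isUnit_left huv
    refine ⟨1 - e, u, hu, by ring, ?_⟩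
    have : (1 - e) ^ 2 - (1 - e) = -(e - e ^ 2) := by ring
    rw [this]
    exact neg_mem he
end

section
/- Let R be a commutative ring. Then R is feckly clean if and only if for every a ∈ R there exists e ∈ R with e ∈ aR, 1 - e ∈ (1-a)R, and e - e² ∈ J(R). -/
theorem stmt16 {R : Type*} [CommRing R] :
    FecklyCleanComm R ↔ ∀ a : R, ∃ e : R,
      (∃ r : R, e = a * r) ∧ (∃ s : R, 1 - e = (1 - a) * s) ∧
      e - e ^ 2 ∈ Ideal.jacobson (⊥ : Ideal R) := by
  constructor
  · intro h a
    obtain ⟨f, u, hu, ha, hf⟩ := h a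
    obtain ⟨U, rfl⟩ := hu
    subst ha
    set u : R := (U : R) with hU
    set v : R := ((U⁻¹ : Rˣ) : R) with hv
    have huv : u * v = 1 := by rw [hU, hv]; exact_mod_cast U.mul_inv
    set a : R := f + u with haa
    refine ⟨a + a * (1 - a) * v, ⟨1 + (1 - a) * v, by ring⟩, ⟨1 - a * v, by ring⟩, ?_⟩
    have key : (a + a * (1 - a) * v) - (a + a * (1 - a) * v) ^ 2 =
        (f ^ 2 - f) * (-(1 + v * (2 * f - 1 - v * (f - f ^ 2)))) := by
      rw [haa]
      linear_combination ((1 - 2*f - u) * (1 - 2*(1 - f + v*(f - f^2))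
        - (u*v - 1)*(1 - 2*f - u))) * huv
    rw [key]
    exact Ideal.mul_mem_right _ _ hf
  · intro h a
    obtain ⟨e, ⟨r, her⟩, ⟨s, hes⟩, hj⟩ := h a
    refine ⟨1 - e, a - 1 + e, ?_, by ring, ?_⟩
    · have key : (a - 1 + e) * (e * r - (1 - e) * s) =
          (e - e ^ 2) * (-(2 + r + s)) + 1 := by
        linear_combination (-e) * her + (-(1 - e)) * hes
      have hu : IsUnit ((a - 1 + e) * (e * r - (1 - e) * s)) := by
        rw [key]
        exact Ideal.mem_jacobson_bot.mp hj (-(2 + r + s))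
      exact isUnit_of_mul_isUnit_left hu
    · have : (1 - e) ^ 2 - (1 - e) = -(e - e ^ 2) := by ring
      rw [this]
      exact neg_mem hj
end

section
/- Let R be a commutative ring. If for every a ∈ R there exist n ≥ 1, e ∈ R and a unit u with aⁿ = e + u and e - e² ∈ J(R), then R is feckly clean. -/
private lemma aux_pow_idem {S : Type*} [CommRing S] {b : S} (hb : b ^ 2 = b) :
    ∀ n : ℕ, 1 ≤ n → b ^ n = b := by
  intro n hn
  induction n with
  | zero => omega
  | succ m ih =>
    rcases Nat.eq_or_lt_of_le hn with h1 | h1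
    · simp [← h1]
    · have hm : 1 ≤ m := by omega
      rw [pow_succ, ih hm, ← pow_two, hb]

private lemma aux_unit_sub {S : Type*} [CommRing S] {a b v : S} {n : ℕ} (hn : 1 ≤ n)
    (hb : b ^ 2 = b) (hv : IsUnit v) (hs : a ^ n = b + v) : IsUnit (a - b) := by
  by_contra hnu
  obtain ⟨M, hM, hmem⟩ := exists_max_ideal_of_mem_nonunits hnu
  have hd : a - b ∣ a ^ n - b ^ n := sub_dvd_pow_sub_pow a b n
  have h1 : a ^ n - b ^ n ∈ M := Ideal.mem_of_dvd M hd hmem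
  rw [aux_pow_idem hb n hn, hs] at h1
  simp only [add_sub_cancel_left] at h1
  exact hM.ne_top (M.eq_top_of_isUnit_mem h1 hv)

private lemma aux_unit_lift {R : Type*} [CommRing R] {x : R}
    (hx : IsUnit (Ideal.Quotient.mk (Ideal.jacobson (⊥ : Ideal R)) x)) : IsUnit x := by
  obtain ⟨w, hw⟩ := hx.exists_right_inv
  obtain ⟨y, rfl⟩ := Ideal.Quotient.mk_surjective w
  have hmem : x * y - 1 ∈ Ideal.jacobson (⊥ : Ideal R) := by
    rw [← Ideal.Quotient.eq_zero_iff_mem]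
    simp only [map_sub, map_mul, map_one, hw, sub_self]
  have := (Ideal.mem_jacobson_bot.mp hmem) 1
  have hxy : IsUnit (x * y) := by
    have heq : (x * y - 1) * 1 + 1 = x * y := by ring
    rwa [heq] at this
  exact isUnit_of_mul_isUnit_left hxy

theorem stmt17 {R : Type*} [CommRing R]
    (h : ∀ a : R, ∃ n : ℕ, 1 ≤ n ∧ ∃ e u : R, IsUnit u ∧ a ^ n = e + u ∧
      e - e ^ 2 ∈ Ideal.jacobson (⊥ : Ideal R)) :
    FecklyCleanComm R := by
  intro a
  obtain ⟨n, hn, e, u, hu, heu, hej⟩ := h a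
  set J := Ideal.jacobson (⊥ : Ideal R) with hJ
  have hej' : e ^ 2 - e ∈ J := by
    have := J.neg_mem hej
    simpa using this
  refine ⟨e, a - e, ?_, by ring, hej'⟩
  -- work in quotient
  set f := Ideal.Quotient.mk J with hf
  have hbidem : (f e) ^ 2 = f e := by
    have : f (e ^ 2 - e) = 0 := Ideal.Quotient.eq_zero_iff_mem.mpr hej'
    have h2 : f (e ^ 2) = f e := by
      have := sub_eq_zero.mp (by simpa using this)
      simpa using this
    simpa using h2
  have hfv : IsUnit (f u) := hu.map f
  have hfs : (f a) ^ n = f e + f u := by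
    rw [← map_pow, heu, map_add]
  have := aux_unit_sub hn hbidem hfv hfs
  have : IsUnit (f (a - e)) := by simpa using this
  exact aux_unit_lift this
end

section
/- Let R be a commutative feckly clean ring. Then for any a, b ∈ R with a + b = 1, there exist r, s ∈ R such that (1 + ar)(1 + bs) ∈ J(R). -/
theorem stmt18 {R : Type*} [CommRing R] (hR : FecklyCleanComm R) (a b : R)
    (hab : a + b = 1) :
    ∃ r s : R, (1 + a * r) * (1 + b * s) ∈ Ideal.jacobson (⊥ : Ideal R) := by
  obtain ⟨e, u, hu, hae, hq⟩ := hR a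
  obtain ⟨uu, huu⟩ := hu
  set v : R := ↑uu⁻¹ with hv
  have hvu : u * v = 1 := by rw [← huu, hv]; exact_mod_cast uu.mul_inv
  refine ⟨v * (e - 1), v * e, ?_⟩
  have h1 : 1 + a * (v * (e - 1)) = e + v * (e ^ 2 - e) := by
    rw [hae]; linear_combination (e - 1) * hvu
  have h2 : 1 + b * (v * e) = (1 - e) - v * (e ^ 2 - e) := by
    have hb : b = 1 - a := by linear_combination hab
    rw [hb, hae]; linear_combination (-e) * hvu
  rw [h1, h2]
  have key : (e + v * (e ^ 2 - e)) * ((1 - e) - v * (e ^ 2 - e)) =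
      (-1 + v * (1 - 2 * e) - v ^ 2 * (e ^ 2 - e)) * (e ^ 2 - e) := by ring
  rw [key]
  exact Ideal.mul_mem_left _ _ hq
end
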